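/- Let d ≥ 11, γ = (d - √(d^2 - 12d + 24))/2, α = γ - 2 and β > 0. Then the function φ(y) = (2β) y^{2-γ} - 4(d/2 - γ + 1) y^{-γ} on (0,∞) satisfies ℒ_∞^β φ = 2β(α/2 - 1) φ, where ℒ_∞^β φ = φ'' + ((d+1)/y) φ' - β(y φ' + 2φ) + (3(d-2)/y^2) φ. -/

import Mathlib

/-!
Each power `y ^ p` is mapped by `ℒ_∞^β` to `Q(p) y^(p-2) - β (p + 2) y^p` with indicial polynomial
`Q(p) = p² + d p + 3(d - 2)`. Since `γ` is a root of `γ² - dγ + 3(d - 2)`, `Q(-γ) = 0` and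
`Q(2 - γ) = 4(d/2 - γ + 1)`; the coefficients of `φ` are chosen so that the two `y^(-γ)` terms
cancel, leaving `-β (4 - γ) φ = 2β(α/2 - 1) φ`.
-/

open Real

lemma quadratic_root_sub_sqrt {b c : ℝ} (h : 0 ≤ b ^ 2 - 4 * c) :
    ((b - √(b ^ 2 - 4 * c)) / 2) ^ 2 - b * ((b - √(b ^ 2 - 4 * c)) / 2) + c = 0 := by
  linear_combination Real.sq_sqrt h / 4

section PowerCombination

variable {a b p q x : ℝ}

lemma deriv_const_mul_rpow_add (hx : x ≠ 0) :
    deriv (fun y : ℝ => a * y ^ p + b * y ^ q) x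
      = a * p * x ^ (p - 1) + b * q * x ^ (q - 1) := by
  have hp := (hasDerivAt_rpow_const (p := p) (Or.inl hx)).const_mul a
  have hq := (hasDerivAt_rpow_const (p := q) (Or.inl hx)).const_mul b
  exact (hp.add hq).deriv.trans (by ring)

lemma deriv_deriv_const_mul_rpow_add (hx : x ≠ 0) :
    deriv (deriv fun y : ℝ => a * y ^ p + b * y ^ q) x
      = a * p * (p - 1) * x ^ (p - 2) + b * q * (q - 1) * x ^ (q - 2) := by
  have hderiv : deriv (fun y : ℝ => a * y ^ p + b * y ^ q)
      =ᶠ[nhds x] fun y => a * p * y ^ (p - 1) + b * q * y ^ (q - 1) := by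
    filter_upwards [isOpen_ne.mem_nhds hx] with y hy
    exact deriv_const_mul_rpow_add hy
  rw [hderiv.deriv_eq, deriv_const_mul_rpow_add (a := a * p) (p := p - 1) hx]
  ring_nf

end PowerCombination

/-- The operator `ℒ_∞^β`. -/
noncomputable def yangMillsLinOp (d β : ℝ) (f : ℝ → ℝ) (y : ℝ) : ℝ :=
  deriv (deriv f) y + ((d + 1) / y) * deriv f y
    - β * (y * deriv f y + 2 * f y) + (3 * (d - 2) / y ^ 2) * f y

lemma yangMillsLinOp_const_mul_rpow_add (d β a b p q : ℝ) {y : ℝ} (hy : y ≠ 0) :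
    yangMillsLinOp d β (fun y => a * y ^ p + b * y ^ q) y
      = a * ((p ^ 2 + d * p + 3 * (d - 2)) * y ^ (p - 2) - β * (p + 2) * y ^ p)
        + b * ((q ^ 2 + d * q + 3 * (d - 2)) * y ^ (q - 2) - β * (q + 2) * y ^ q) := by
  have rpow_sub_two (r : ℝ) : y ^ (r - 2) = y ^ r / y ^ 2 := by
    exact_mod_cast rpow_sub_natCast hy r 2
  simp only [yangMillsLinOp, deriv_deriv_const_mul_rpow_add hy, deriv_const_mul_rpow_add hy,
    rpow_sub_one hy, rpow_sub_two]
  field_simp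
  ring

theorem stmt4_general (d β γ α : ℝ) (hd : 11 ≤ d)
    (hγ : γ = (d - Real.sqrt (d ^ 2 - 12 * d + 24)) / 2)
    (hα : α = γ - 2)
    (φ : ℝ → ℝ)
    (hφ : ∀ y : ℝ, φ y = (2 * β) * y ^ (2 - γ) - 4 * (d / 2 - γ + 1) * y ^ (-γ)) :
    ∀ y : ℝ, 0 < y →
      deriv (deriv φ) y + ((d + 1) / y) * deriv φ y
        - β * (y * deriv φ y + 2 * φ y) + (3 * (d - 2) / y ^ 2) * φ y
        = 2 * β * (α / 2 - 1) * φ y := by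
  intro y hy
  have hroot : γ ^ 2 - d * γ + 3 * (d - 2) = 0 := by
    have h := quadratic_root_sub_sqrt (b := d) (c := 3 * (d - 2)) (by nlinarith)
    rwa [show d ^ 2 - 4 * (3 * (d - 2)) = d ^ 2 - 12 * d + 24 by ring, ← hγ] at h
  have hφ_eq : φ = fun y => 2 * β * y ^ (2 - γ) + (-4 * (d / 2 - γ + 1)) * y ^ (-γ) := by
    funext y
    rw [hφ]
    ring
  change yangMillsLinOp d β φ y = _
  rw [hφ_eq, yangMillsLinOp_const_mul_rpow_add d β _ _ _ _ hy.ne', hα, show 2 - γ - 2 = -γ by ring]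
  linear_combination (2 * β * y ^ (-γ) - 4 * (d / 2 - γ + 1) * y ^ (-γ - 2)) * hroot

/-- For `d ≥ 11`, `γ = (d - √(d^2-12d+24))/2`, `α = γ - 2`, `β > 0`, the function
`φ(y) = (2β) y^{2-γ} - 4(d/2 - γ + 1) y^{-γ}` on `(0,∞)` satisfies
`ℒ_∞^β φ = 2β(α/2 - 1) φ`. -/
theorem stmt4 (d β γ α : ℝ) (hd : 11 ≤ d) (hβ : 0 < β)
    (hγ : γ = (d - Real.sqrt (d ^ 2 - 12 * d + 24)) / 2)
    (hα : α = γ - 2)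
    (φ : ℝ → ℝ)
    (hφ : ∀ y : ℝ, φ y = (2 * β) * y ^ (2 - γ) - 4 * (d / 2 - γ + 1) * y ^ (-γ)) :
    ∀ y : ℝ, 0 < y →
      deriv (deriv φ) y + ((d + 1) / y) * deriv φ y
        - β * (y * deriv φ y + 2 * φ y) + (3 * (d - 2) / y ^ 2) * φ y
        = 2 * β * (α / 2 - 1) * φ y :=
  stmt4_general d β γ α hd hγ hα φ hφ
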